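/- Let u(x,y) be a smooth function satisfying u_{xy} = exp(2u)·sqrt(1 + 4ε²u_x²) for a real parameter ε ≠ 0. Then w = (1 - sqrt(1 + 4ε²u_x²))/(2ε²) + u_{xx}/sqrt(1 + 4ε²u_x²) satisfies ∂w/∂y = 0. -/

import Mathlib

noncomputable def Dv (v : ℝ × ℝ) (f : ℝ × ℝ → ℝ) : ℝ × ℝ → ℝ := fun p => fderiv ℝ f p v

lemma Dv_contDiff {f : ℝ × ℝ → ℝ} (hf : ContDiff ℝ (⊤ : ℕ∞) f) (v : ℝ × ℝ) :
    ContDiff ℝ (⊤ : ℕ∞) (Dv v f) :=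
  (hf.fderiv_right (by simp)).clm_apply contDiff_const

lemma hasDerivAt_slice_x {f : ℝ × ℝ → ℝ} (hf : ContDiff ℝ (⊤ : ℕ∞) f) (x y : ℝ) :
    HasDerivAt (fun s => f (s, y)) (Dv (1, 0) f (x, y)) x := by
  have h1 : HasDerivAt (fun s : ℝ => (s, y)) ((1 : ℝ), (0 : ℝ)) x :=
    (hasDerivAt_id x).prodMk (hasDerivAt_const x y)
  exact (hf.differentiable (by simp) (x, y)).hasFDerivAt.comp_hasDerivAt x h1

lemma hasDerivAt_slice_y {f : ℝ × ℝ → ℝ} (hf : ContDiff ℝ (⊤ : ℕ∞) f) (x y : ℝ) :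
    HasDerivAt (fun t => f (x, t)) (Dv (0, 1) f (x, y)) y := by
  have h1 : HasDerivAt (fun t : ℝ => (x, t)) ((0 : ℝ), (1 : ℝ)) y :=
    (hasDerivAt_const y x).prodMk (hasDerivAt_id y)
  exact (hf.differentiable (by simp) (x, y)).hasFDerivAt.comp_hasDerivAt y h1

lemma Dv_swap {f : ℝ × ℝ → ℝ} (hf : ContDiff ℝ (⊤ : ℕ∞) f) (v w : ℝ × ℝ) (p : ℝ × ℝ) :
    Dv v (Dv w f) p = Dv w (Dv v f) p := by
  have hsymm : IsSymmSndFDerivAt ℝ f p := by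
    exact (hf.contDiffAt).isSymmSndFDerivAt (by rw [minSmoothness_of_isRCLikeNormedField]; exact WithTop.coe_le_coe.mpr (le_top : (2 : ℕ∞) ≤ ⊤))
  have hd : ∀ z : ℝ × ℝ, DifferentiableAt ℝ (fderiv ℝ f) z := fun z =>
    ((hf.fderiv_right (m := (⊤ : ℕ∞)) (by simp)).differentiable (by simp) z)
  have key : ∀ a : ℝ × ℝ, fderiv ℝ (Dv a f) p = (fderiv ℝ (fderiv ℝ f) p).flip a := by
    intro a
    have : Dv a f = fun z => (fderiv ℝ f z) a := rfl
    rw [this, fderiv_clm_apply (hd p) (differentiableAt_const a)]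
    simp
  simp only [Dv, key, ContinuousLinearMap.flip_apply]
  exact hsymm v w

/-- For ε ≠ 0 and a smooth solution `u(x,y)` of the extended Liouville
equation `u_{xy} = e^{2u}·√(1 + 4ε²u_x²)`, the function
`w = (1 - √(1+4ε²u_x²))/(2ε²) + u_{xx}/√(1+4ε²u_x²)` satisfies `∂w/∂y = 0`. -/
theorem stmt_6 (ε : ℝ) (hε : ε ≠ 0) (u w : ℝ → ℝ → ℝ)
    (hu : ContDiff ℝ (⊤ : ℕ∞) (Function.uncurry u))
    (heq : ∀ x y : ℝ, deriv (fun t => deriv (fun s => u s t) x) y =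
      Real.exp (2 * u x y) * Real.sqrt (1 + 4 * ε ^ 2 * (deriv (fun s => u s y) x) ^ 2))
    (hw : ∀ x y : ℝ, w x y =
      (1 - Real.sqrt (1 + 4 * ε ^ 2 * (deriv (fun s => u s y) x) ^ 2)) / (2 * ε ^ 2)
        + iteratedDeriv 2 (fun s => u s y) x
          / Real.sqrt (1 + 4 * ε ^ 2 * (deriv (fun s => u s y) x) ^ 2)) :
    ∀ x y : ℝ, deriv (fun t => w x t) y = 0 := by
  intro x y
  set U : ℝ × ℝ → ℝ := Function.uncurry u with hUdef
  set P : ℝ × ℝ → ℝ := Dv (1, 0) U with hPdef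
  have hP : ContDiff ℝ (⊤ : ℕ∞) P := Dv_contDiff hu _
  set Q : ℝ × ℝ → ℝ := Dv (1, 0) P with hQdef
  have hQ : ContDiff ℝ (⊤ : ℕ∞) Q := Dv_contDiff hP _
  -- identification of the first x-derivative
  have hux : ∀ a b : ℝ, deriv (fun s => u s b) a = P (a, b) := fun a b =>
    (hasDerivAt_slice_x hu a b).deriv
  -- identification of the second x-derivative
  have hQs : ∀ a b : ℝ, iteratedDeriv 2 (fun s => u s b) a = Q (a, b) := by
    intro a b
    rw [iteratedDeriv_succ, iteratedDeriv_one]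
    have h : deriv (fun s => u s b) = fun s => P (s, b) := funext fun a' => hux a' b
    rw [h]
    exact (hasDerivAt_slice_x hP a b).deriv
  -- the PDE in terms of P
  have hPy : ∀ a b : ℝ, Dv (0, 1) P (a, b)
      = Real.exp (2 * u a b) * Real.sqrt (1 + 4 * ε ^ 2 * (P (a, b)) ^ 2) := by
    intro a b
    have h1 : deriv (fun t => P (a, t)) b = Dv (0, 1) P (a, b) :=
      (hasDerivAt_slice_y hP a b).deriv
    have h2 := heq a b
    simp only [hux] at h2
    rw [← h1, h2]
  set g : ℝ × ℝ → ℝ :=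
    fun pt => Real.exp (2 * U pt) * Real.sqrt (1 + 4 * ε ^ 2 * (P pt) ^ 2) with hgdef
  have hPyg : Dv (0, 1) P = g := funext fun pt => by
    obtain ⟨a, b⟩ := pt; exact hPy a b
  have hgd : DifferentiableAt ℝ g (x, y) := by
    have hU' : DifferentiableAt ℝ U (x, y) := (hu.differentiable (by simp)) (x, y)
    have hP' : DifferentiableAt ℝ P (x, y) := (hP.differentiable (by simp)) (x, y)
    have harg : DifferentiableAt ℝ (fun z => 1 + 4 * ε ^ 2 * (P z) ^ 2) (x, y) :=
      (differentiableAt_const _).add ((hP'.pow 2).const_mul _)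
    have hpos : (1 : ℝ) + 4 * ε ^ 2 * (P (x, y)) ^ 2 ≠ 0 := by positivity
    exact ((hU'.const_mul 2).exp).mul (harg.sqrt hpos)
  set p : ℝ := P (x, y) with hpdef
  set q : ℝ := Q (x, y) with hqdef
  set e : ℝ := Real.exp (2 * u x y) with hedef
  set S : ℝ := Real.sqrt (1 + 4 * ε ^ 2 * p ^ 2) with hSdef
  have hApos : (0 : ℝ) < 1 + 4 * ε ^ 2 * p ^ 2 := by positivity
  have hSpos : 0 < S := Real.sqrt_pos.mpr hApos
  have hSne : S ≠ 0 := ne_of_gt hSpos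
  have hS2 : S ^ 2 = 1 + 4 * ε ^ 2 * p ^ 2 := Real.sq_sqrt hApos.le
  have hepos : 0 < e := Real.exp_pos _
  -- the y-derivative of Q
  have hQy : Dv (0, 1) Q (x, y) = e * (2 * p) * S + e * ((4 * ε ^ 2 * (2 * p * q)) / (2 * S)) := by
    have hswap := Dv_swap hP (0, 1) (1, 0) (x, y)
    rw [hQdef, hswap, hPyg]
    have hline : HasDerivAt (fun s : ℝ => (s, y)) ((1 : ℝ), (0 : ℝ)) x :=
      (hasDerivAt_id x).prodMk (hasDerivAt_const x y)
    have hslice : HasDerivAt (fun s => g (s, y)) (Dv (1, 0) g (x, y)) x :=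
      hgd.hasFDerivAt.comp_hasDerivAt (l := g) x hline
    have hp : HasDerivAt (fun s => u s y) p x := hasDerivAt_slice_x hu x y
    have hq : HasDerivAt (fun s => P (s, y)) q x := hasDerivAt_slice_x hP x y
    have harg : HasDerivAt (fun s => 1 + 4 * ε ^ 2 * (P (s, y)) ^ 2) (4 * ε ^ 2 * (2 * p * q)) x := by
      have h := ((hq.fun_pow 2).const_mul (4 * ε ^ 2)).const_add 1
      convert h using 1
      all_goals first | rfl | (push_cast; ring)
    have hargne : (1 : ℝ) + 4 * ε ^ 2 * (P (x, y)) ^ 2 ≠ 0 := by positivity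
    have hsq : HasDerivAt (fun s => Real.sqrt (1 + 4 * ε ^ 2 * (P (s, y)) ^ 2))
        ((4 * ε ^ 2 * (2 * p * q)) / (2 * S)) x := harg.sqrt hargne
    have hex : HasDerivAt (fun s => Real.exp (2 * u s y)) (e * (2 * p)) x := by
      exact (hp.const_mul 2).exp
    have hg2 : HasDerivAt (fun s => g (s, y))
        (e * (2 * p) * S + e * ((4 * ε ^ 2 * (2 * p * q)) / (2 * S))) x := hex.mul hsq
    exact hslice.unique hg2
  -- rewrite w along the vertical line
  have hw' : (fun t => w x t) = fun t =>
      (1 - Real.sqrt (1 + 4 * ε ^ 2 * (P (x, t)) ^ 2)) / (2 * ε ^ 2)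
        + Q (x, t) / Real.sqrt (1 + 4 * ε ^ 2 * (P (x, t)) ^ 2) :=
    funext fun t => by rw [hw x t, hux, hQs]
  rw [hw']
  have hPy' : HasDerivAt (fun t => P (x, t)) (e * S) y := by
    have h := hasDerivAt_slice_y hP x y
    rwa [hPy x y] at h
  have hQy' : HasDerivAt (fun t => Q (x, t))
      (e * (2 * p) * S + e * ((4 * ε ^ 2 * (2 * p * q)) / (2 * S))) y := by
    have h := hasDerivAt_slice_y hQ x y
    rwa [hQy] at h
  have hargy : HasDerivAt (fun t => 1 + 4 * ε ^ 2 * (P (x, t)) ^ 2)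
      (4 * ε ^ 2 * (2 * p * (e * S))) y := by
    have h := ((hPy'.fun_pow 2).const_mul (4 * ε ^ 2)).const_add 1
    convert h using 1
    all_goals first | rfl | (push_cast; ring)
  have hargyne : (1 : ℝ) + 4 * ε ^ 2 * (P (x, y)) ^ 2 ≠ 0 := by positivity
  have hSy : HasDerivAt (fun t => Real.sqrt (1 + 4 * ε ^ 2 * (P (x, t)) ^ 2))
      ((4 * ε ^ 2 * (2 * p * (e * S))) / (2 * S)) y := hargy.sqrt hargyne
  have h1 : HasDerivAt (fun t => (1 - Real.sqrt (1 + 4 * ε ^ 2 * (P (x, t)) ^ 2)) / (2 * ε ^ 2))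
      (-((4 * ε ^ 2 * (2 * p * (e * S))) / (2 * S)) / (2 * ε ^ 2)) y :=
    (hSy.const_sub 1).div_const _
  have h2 : HasDerivAt (fun t => Q (x, t) / Real.sqrt (1 + 4 * ε ^ 2 * (P (x, t)) ^ 2))
      (((e * (2 * p) * S + e * ((4 * ε ^ 2 * (2 * p * q)) / (2 * S))) * S
          - q * ((4 * ε ^ 2 * (2 * p * (e * S))) / (2 * S))) / S ^ 2) y :=
    hQy'.div hSy hSne
  rw [(h1.fun_add h2).deriv]
  field_simp
  ring
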